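/- arXiv:2112.01632 — 2 statements merged into one kernel-verified Lean document; each statement's English description precedes it below -/
import Mathlib

section
/- Let f : ℝ² → ℝ be continuous and compactly supported in the half-plane z < 1, and set f₁(x,z) = f(x, 2−z). For r > 1 define the Radon transform on double circle arcs R_D f(x₀, r) = ∫₁^r (1/√(1−(z/r)²)) [ Σ_{j=1}^{2} f₁(√(r²−1) + (−1)^j r √(1−(z/r)²) + x₀, z) + f₁(−√(r²−1) + (−1)^j r √(1−(z/r)²) + x₀, z) ] dz. Then the one-dimensional Fourier transform of R_D f with respect to x₀ satisfies: for all ξ ∈ ℝ and r > 1, \hat{R_D f}(ξ, r) = 4 ∫_{1/r}^{1} (r/√(1−s²)) \hat{f₁}(ξ, r s) cos(ξ √(r²−1)) cos(ξ r √(1−s²)) ds, where \hat{f₁}(ξ, z) = ∫_ℝ f₁(x, z) e^{−i x ξ} dx. -/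
/-!
Write `b(z) = r√(1-(z/r)²)`. The translate `x₀ ↦ f₁(x₀ + a, z)` has Fourier transform
`e^{iaξ} \hat{f₁}(ξ, z)`, and for the four shifts `a = ±√(r²-1) ± b(z)` the phases add up to
`4 cos(ξ√(r²-1)) cos(ξ b(z))`. Fubini lets this be done under the `z`-integral: `f₁` is bounded with
compact support, and the arc weight `1/√(1-(z/r)²)` is integrable, being the derivative of
`r arcsin(z/r)`. The substitution `z = r s` then gives the formula.
-/

open MeasureTheory Real Set Function

noncomputable def angularFourierIntegral (g : ℝ → ℂ) (ξ : ℝ) : ℂ :=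
  ∫ x, g x * Complex.exp (-Complex.I * x * ξ)

def fourShifts (φ : ℝ → ℝ) (A b x : ℝ) : ℝ :=
  (φ (A - b + x) + φ (A + b + x)) + (φ (-A - b + x) + φ (-A + b + x))

lemma norm_exp_neg_I_mul_mul (x ξ : ℝ) : ‖Complex.exp (-Complex.I * x * ξ)‖ = 1 := by
  rw [show -Complex.I * x * ξ = ((-(x * ξ) : ℝ) : ℂ) * Complex.I by push_cast; ring,
    Complex.norm_exp_ofReal_mul_I]

lemma MeasureTheory.Integrable.mul_exp_neg_I_mul {α : Type*} [MeasurableSpace α] {μ : Measure α}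
    {g : α → ℂ} (hg : Integrable g μ) {t : α → ℝ} (ht : Measurable t) (ξ : ℝ) :
    Integrable (fun p => g p * Complex.exp (-Complex.I * t p * ξ)) μ :=
  hg.mul_bdd (by fun_prop) (c := 1)
    (ae_of_all _ fun p => (norm_exp_neg_I_mul_mul (t p) ξ).le)

lemma angularFourierIntegral_comp_add_left (g : ℝ → ℂ) (a ξ : ℝ) :
    angularFourierIntegral (fun x => g (a + x)) ξ
      = Complex.exp (Complex.I * a * ξ) * angularFourierIntegral g ξ := by
  unfold angularFourierIntegral
  rw [← integral_const_mul,
    ← integral_add_left_eq_self (fun x => Complex.exp (Complex.I * a * ξ) *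
      (g x * Complex.exp (-Complex.I * x * ξ))) a]
  congr with x
  rw [mul_left_comm, ← Complex.exp_add]
  push_cast
  ring_nf

lemma Complex.four_cos_mul_cos (u v : ℂ) :
    4 * cos u * cos v
      = exp (I * (u - v)) + exp (I * (u + v)) + exp (I * (-u - v)) + exp (I * (-u + v)) := by
  simp only [cos, mul_sub, mul_add, mul_neg, exp_add, exp_sub, exp_neg, mul_comm _ I]
  field_simp
  ring

lemma angularFourierIntegral_fourShifts {φ : ℝ → ℝ} (hφ : Integrable φ) (A b ξ : ℝ) :
    angularFourierIntegral (fun x => (fourShifts φ A b x : ℂ)) ξ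
      = 4 * (Real.cos (ξ * A) : ℂ) * (Real.cos (ξ * b) : ℂ)
          * angularFourierIntegral (fun x => (φ x : ℂ)) ξ := by
  have hint : ∀ a, Integrable fun x => (φ (a + x) : ℂ) * Complex.exp (-Complex.I * x * ξ) :=
    fun a => (hφ.comp_add_left a).ofReal.mul_exp_neg_I_mul measurable_id ξ
  have hsplit := fun a => angularFourierIntegral_comp_add_left (fun x => (φ x : ℂ)) a ξ
  unfold angularFourierIntegral at hsplit ⊢
  simp only [fourShifts, Complex.ofReal_add, add_mul]
  rw [integral_add, integral_add (hint _) (hint _), integral_add (hint _) (hint _),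
    hsplit, hsplit, hsplit, hsplit, ← add_mul, ← add_mul, ← add_mul, ← add_assoc,
    Complex.ofReal_cos, Complex.ofReal_cos, Complex.four_cos_mul_cos]
  · congr 1; push_cast; ring_nf
  all_goals exact (hint _).add (hint _)

lemma integrableOn_one_div_sqrt_one_sub_div_sq {r : ℝ} (hr : 0 < r) :
    IntegrableOn (fun z => 1 / √(1 - (z / r) ^ 2)) (Ioc (-r) r) := by
  refine intervalIntegral.integrableOn_deriv_of_nonneg (g := fun z => r * arcsin (z / r))
    (by fun_prop) (fun z hz => ?_) (fun z _ => by positivity)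
  have hz' : z / r ∈ Ioo (-1) 1 := by
    rw [mem_Ioo, lt_div_iff₀ hr, div_lt_iff₀ hr]; constructor <;> linarith [hz.1, hz.2]
  refine (((hasDerivAt_arcsin hz'.1.ne' hz'.2.ne).comp z
    ((hasDerivAt_id z).div_const r)).const_mul r).congr_deriv ?_
  field_simp

lemma integrable_prod_weight_mul_shift {φ : ℝ → ℝ → ℝ} (hφ : Continuous (uncurry φ))
    (hφc : HasCompactSupport (uncurry φ)) {w : ℝ → ℝ} {s : Set ℝ} (hw : IntegrableOn w s)
    {a : ℝ → ℝ} (ha : Continuous a) {R : ℝ} (haR : ∀ z, |a z| ≤ R) :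
    Integrable (fun p : ℝ × ℝ => w p.2 * φ (a p.2 + p.1) p.2)
      (volume.prod (volume.restrict s)) := by
  obtain ⟨C, hC⟩ := hφ.bounded_above_of_compact_support hφc
  obtain ⟨M, hM⟩ := (hφc.image continuous_fst).isBounded.subset_closedBall 0
  have hbound : Integrable (fun p : ℝ × ℝ => (Icc (-(M + R)) (M + R)).indicator (fun _ => C) p.1
      * ‖w p.2‖) (volume.prod (volume.restrict s)) :=
    ((integrable_indicator_iff measurableSet_Icc).2
      (integrableOn_const measure_Icc_lt_top.ne)).mul_prod hw.norm
  have hcont : Continuous fun p : ℝ × ℝ => φ (a p.2 + p.1) p.2 :=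
    hφ.comp (f := fun p : ℝ × ℝ => (a p.2 + p.1, p.2)) (by fun_prop)
  refine hbound.mono' (hw.aestronglyMeasurable.comp_snd.mul hcont.aestronglyMeasurable)
    (ae_of_all _ fun ⟨x, z⟩ => ?_)
  rw [norm_mul, mul_comm]
  by_cases h : φ (a z + x) z = 0
  · have hC0 : 0 ≤ C := (norm_nonneg _).trans (hC 0)
    rw [h, norm_zero, zero_mul]
    exact mul_nonneg (indicator_nonneg (fun _ _ => hC0) _) (norm_nonneg _)
  · have hx : ‖a z + x‖ ≤ M := by
      simpa using hM ⟨(a z + x, z), subset_tsupport _ h, rfl⟩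
    have hxMR : x ∈ Icc (-(M + R)) (M + R) := by
      rw [Real.norm_eq_abs] at hx
      have := haR z
      rw [mem_Icc]; constructor <;> linarith [abs_le.1 hx, abs_le.1 this]
    rw [indicator_of_mem hxMR]
    exact mul_le_mul_of_nonneg_right (hC (a z + x, z)) (norm_nonneg _)

lemma angularFourierIntegral_integral_fourShifts {φ : ℝ → ℝ → ℝ} (hφ : Continuous (uncurry φ))
    (hφc : HasCompactSupport (uncurry φ)) {w : ℝ → ℝ} {s : Set ℝ} (hw : IntegrableOn w s)
    {b : ℝ → ℝ} (hb : Continuous b) {R : ℝ} (hbR : ∀ z, |b z| ≤ R) (A ξ : ℝ) :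
    angularFourierIntegral
        (fun x₀ => ((∫ z in s, w z * fourShifts (φ · z) A (b z) x₀ : ℝ) : ℂ)) ξ
      = ∫ z in s, (w z : ℂ) * (4 * (Real.cos (ξ * A) : ℂ) * (Real.cos (ξ * b z) : ℂ)
          * angularFourierIntegral (fun x => (φ x z : ℂ)) ξ) := by
  have hshift (σ τ : ℝ) (hσ : |σ| = 1) (hτ : |τ| = 1) :=
    integrable_prod_weight_mul_shift hφ hφc hw (a := fun z => σ * A + τ * b z) (by fun_prop)
      (R := |A| + R) fun z => by
        grw [abs_add_le, abs_mul, abs_mul, hσ, hτ, hbR z]; simp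
  have hint : Integrable (fun p : ℝ × ℝ => w p.2 * fourShifts (φ · p.2) A (b p.2) p.1)
      (volume.prod (volume.restrict s)) := by
    have h := ((hshift 1 (-1) (by simp) (by simp)).add (hshift 1 1 (by simp) (by simp))).add
      ((hshift (-1) (-1) (by simp) (by simp)).add (hshift (-1) 1 (by simp) (by simp)))
    refine h.congr (ae_of_all _ fun p => ?_)
    simp only [fourShifts, Pi.add_apply, mul_add, one_mul, neg_one_mul, ← sub_eq_add_neg]
  have hslice (z : ℝ) : Integrable fun x => φ x z := by
    refine (hφ.comp (.prodMk_left z)).integrable_of_hasCompactSupport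
      (.intro (hφc.image continuous_fst) fun x hx => ?_)
    by_contra h
    exact hx ⟨(x, z), subset_tsupport _ h, rfl⟩
  calc angularFourierIntegral
        (fun x₀ => ((∫ z in s, w z * fourShifts (φ · z) A (b z) x₀ : ℝ) : ℂ)) ξ
      = ∫ x₀, ∫ z in s, ((w z * fourShifts (φ · z) A (b z) x₀ : ℝ) : ℂ)
          * Complex.exp (-Complex.I * x₀ * ξ) := by
        simp only [angularFourierIntegral, ← integral_complex_ofReal, integral_mul_const]
    _ = ∫ z in s, ∫ x₀, ((w z * fourShifts (φ · z) A (b z) x₀ : ℝ) : ℂ)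
          * Complex.exp (-Complex.I * x₀ * ξ) :=
        integral_integral_swap (hint.ofReal.mul_exp_neg_I_mul measurable_fst ξ)
    _ = ∫ z in s, (w z : ℂ)
          * angularFourierIntegral (fun x => (fourShifts (φ · z) A (b z) x : ℂ)) ξ := by
        simp only [angularFourierIntegral, Complex.ofReal_mul, mul_assoc, integral_const_mul]
    _ = _ := by
        simp only [angularFourierIntegral_fourShifts (hslice _)]

lemma intervalIntegral.integral_one_div_sqrt_one_sub_div_sq_mul {r : ℝ} (hr : r ≠ 0) (a b : ℝ)
    (G : ℝ → ℂ) :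
    ∫ z in a..b, ((1 / √(1 - (z / r) ^ 2) : ℝ) : ℂ) * G z
      = r * ∫ s in a / r..b / r, ((1 / √(1 - s ^ 2) : ℝ) : ℂ) * G (r * s) := by
  have := intervalIntegral.integral_comp_div
    (fun s => ((1 / √(1 - s ^ 2) : ℝ) : ℂ) * G (r * s)) (a := a) (b := b) hr
  simp only [mul_div_cancel₀ _ hr] at this
  rw [this, Complex.real_smul]

theorem fourier_transform_of_radon_double_arcs_general
    (f : ℝ × ℝ → ℝ) (hf : Continuous f) (hfc : HasCompactSupport f)
    (f1 : ℝ → ℝ → ℝ) (hf1 : ∀ x z, f1 x z = f (x, 2 - z))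
    (RD : ℝ → ℝ → ℝ)
    (hRD : ∀ x₀ r, 1 < r →
      RD x₀ r = ∫ z in (1 : ℝ)..r,
        (1 / Real.sqrt (1 - (z / r) ^ 2)) *
          ((f1 (Real.sqrt (r ^ 2 - 1) - r * Real.sqrt (1 - (z / r) ^ 2) + x₀) z
            + f1 (Real.sqrt (r ^ 2 - 1) + r * Real.sqrt (1 - (z / r) ^ 2) + x₀) z)
          + (f1 (-Real.sqrt (r ^ 2 - 1) - r * Real.sqrt (1 - (z / r) ^ 2) + x₀) z
            + f1 (-Real.sqrt (r ^ 2 - 1) + r * Real.sqrt (1 - (z / r) ^ 2) + x₀) z))) :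
    ∀ (ξ r : ℝ), 1 < r →
      (∫ x₀ : ℝ, (RD x₀ r : ℂ) * Complex.exp (-Complex.I * x₀ * ξ))
        = 4 * ∫ s in (1 / r : ℝ)..1,
            ((r / Real.sqrt (1 - s ^ 2) : ℝ) : ℂ)
              * (∫ x : ℝ, (f1 x (r * s) : ℂ) * Complex.exp (-Complex.I * x * ξ))
              * (Real.cos (ξ * Real.sqrt (r ^ 2 - 1)) : ℝ)
              * (Real.cos (ξ * r * Real.sqrt (1 - s ^ 2)) : ℝ) := by
  intro ξ r hr
  have hr0 : 0 < r := by linarith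
  have hf1_eq : uncurry f1 = f ∘ (Homeomorph.refl ℝ).prodCongr (Homeomorph.subLeft 2) :=
    funext fun p => hf1 p.1 p.2
  have hw : IntegrableOn (fun z => 1 / √(1 - (z / r) ^ 2)) (Ioc 1 r) :=
    (integrableOn_one_div_sqrt_one_sub_div_sq hr0).mono_set (Ioc_subset_Ioc_left (by linarith))
  have hb_le (z : ℝ) : |r * √(1 - (z / r) ^ 2)| ≤ r := by
    rw [abs_of_nonneg (by positivity)]
    exact mul_le_of_le_one_right hr0.le (sqrt_le_one.2 (by nlinarith [sq_nonneg (z / r)]))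
  calc ∫ x₀, (RD x₀ r : ℂ) * Complex.exp (-Complex.I * x₀ * ξ)
      = angularFourierIntegral (fun x₀ => ((∫ z in Ioc 1 r, 1 / √(1 - (z / r) ^ 2)
          * fourShifts (f1 · z) √(r ^ 2 - 1) (r * √(1 - (z / r) ^ 2)) x₀ : ℝ) : ℂ)) ξ := by
        simp only [hRD _ r hr, intervalIntegral.integral_of_le hr.le]
        rfl
    _ = ∫ z in Ioc 1 r, ((1 / √(1 - (z / r) ^ 2) : ℝ) : ℂ)
          * (4 * (Real.cos (ξ * √(r ^ 2 - 1)) : ℂ) * (Real.cos (ξ * (r * √(1 - (z / r) ^ 2))) : ℂ)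
          * angularFourierIntegral (fun x => (f1 x z : ℂ)) ξ) :=
        angularFourierIntegral_integral_fourShifts (hf1_eq ▸ hf.comp (Homeomorph.continuous _))
          (hf1_eq ▸ hfc.comp_homeomorph _) hw (by fun_prop) hb_le _ ξ
    _ = _ := by
        rw [← intervalIntegral.integral_of_le hr.le,
          intervalIntegral.integral_one_div_sqrt_one_sub_div_sq_mul hr0.ne', div_self hr0.ne',
          ← intervalIntegral.integral_const_mul, ← intervalIntegral.integral_const_mul]
        congr with s
        rw [mul_div_cancel_left₀ _ hr0.ne', angularFourierIntegral]
        push_cast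
        ring_nf

theorem fourier_transform_of_radon_double_arcs
    (f : ℝ × ℝ → ℝ) (hf : Continuous f) (hfc : HasCompactSupport f)
    (hsupp : ∀ p : ℝ × ℝ, 1 ≤ p.2 → f p = 0)
    (f1 : ℝ → ℝ → ℝ) (hf1 : ∀ x z, f1 x z = f (x, 2 - z))
    (RD : ℝ → ℝ → ℝ)
    (hRD : ∀ x₀ r, 1 < r →
      RD x₀ r = ∫ z in (1 : ℝ)..r,
        (1 / Real.sqrt (1 - (z / r) ^ 2)) *
          ((f1 (Real.sqrt (r ^ 2 - 1) - r * Real.sqrt (1 - (z / r) ^ 2) + x₀) z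
            + f1 (Real.sqrt (r ^ 2 - 1) + r * Real.sqrt (1 - (z / r) ^ 2) + x₀) z)
          + (f1 (-Real.sqrt (r ^ 2 - 1) - r * Real.sqrt (1 - (z / r) ^ 2) + x₀) z
            + f1 (-Real.sqrt (r ^ 2 - 1) + r * Real.sqrt (1 - (z / r) ^ 2) + x₀) z))) :
    ∀ (ξ r : ℝ), 1 < r →
      (∫ x₀ : ℝ, (RD x₀ r : ℂ) * Complex.exp (-Complex.I * x₀ * ξ))
        = 4 * ∫ s in (1 / r : ℝ)..1,
            ((r / Real.sqrt (1 - s ^ 2) : ℝ) : ℂ)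
              * (∫ x : ℝ, (f1 x (r * s) : ℂ) * Complex.exp (-Complex.I * x * ξ))
              * (Real.cos (ξ * Real.sqrt (r ^ 2 - 1)) : ℝ)
              * (Real.cos (ξ * r * Real.sqrt (1 - s ^ 2)) : ℝ) :=
  fourier_transform_of_radon_double_arcs_general f hf hfc f1 hf1 RD hRD
end

section
/- Let h : ℝ → ℝ be continuous, compactly supported in (1, ∞), and define for η > ξ > 0: Φ(η) = ∫₁^∞ h(z) cos(z√(η²−ξ²))/√(η²−ξ²) dz. If Φ(η) = 0 for all η > ξ, then h = 0. -/
open MeasureTheory Real FourierTransform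

/-! The even extension `v ↦ h v + h (-v)` has Fourier transform `w ↦ 2 ∫ h(z) cos(2π z w) dz`.
As `η` ranges over `(ξ, ∞)`, `√(η² - ξ²)` ranges over all of `(0, ∞)`, so this transform vanishes
off `0`, hence everywhere by continuity, and Fourier inversion kills the even extension. Since `h`
vanishes on `(-∞, 1]`, the even extension agrees with `h` on `(1, ∞)`. -/

noncomputable def cosineTransform (f : ℝ → ℝ) (σ : ℝ) : ℝ := ∫ x, f x * cos (x * σ)

theorem cosineTransform_neg (f : ℝ → ℝ) (σ : ℝ) :
    cosineTransform f (-σ) = cosineTransform f σ := by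
  simp only [cosineTransform, mul_neg, cos_neg]

theorem MeasureTheory.Integrable.mul_cos {f : ℝ → ℝ} (hf : Integrable f) (σ : ℝ) :
    Integrable (fun x ↦ f x * cos (x * σ)) :=
  hf.mul_bdd (by fun_prop) (.of_forall fun x ↦ by simpa using abs_cos_le_one (x * σ))

theorem cosineTransform_add_comp_neg {f : ℝ → ℝ} (hf : Integrable f) (σ : ℝ) :
    cosineTransform (fun x ↦ f x + f (-x)) σ = 2 * cosineTransform f σ := by
  have hreflect : ∫ x, f (-x) * cos (x * σ) = ∫ x, f x * cos (x * σ) := by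
    simpa only [neg_mul, cos_neg] using integral_neg_eq_self (fun x ↦ f x * cos (x * σ)) volume
  simp only [cosineTransform, add_mul]
  rw [integral_add (hf.mul_cos σ) (by simpa only [neg_mul, cos_neg] using (hf.mul_cos σ).comp_neg),
    hreflect, two_mul]

theorem Real.fourier_eq_integral_cos_smul_of_even {E : Type*} [NormedAddCommGroup E]
    [NormedSpace ℂ E] {g : ℝ → E} (hg : Integrable g) (heven : ∀ v, g (-v) = g v) (w : ℝ) :
    𝓕 g w = ∫ v, (cos (2 * π * v * w) : ℂ) • g v := by
  have hreflect : 𝓕 g (-w) = 𝓕 g w := by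
    have := Real.fourier_comp_linearIsometry (LinearIsometryEquiv.neg ℝ) g w
    rwa [show g ∘ LinearIsometryEquiv.neg ℝ = g from funext heven, eq_comm] at this
  have hint : ∀ w : ℝ, Integrable fun v ↦ Complex.exp (↑(-2 * π * v * w) * Complex.I) • g v :=
    fun w ↦ hg.bdd_smul 1 (by fun_prop) (.of_forall fun v ↦ (Complex.norm_exp_ofReal_mul_I _).le)
  have htwo : (2 : ℂ) • 𝓕 g w = (2 : ℂ) • ∫ v, (cos (2 * π * v * w) : ℂ) • g v := by
    calc (2 : ℂ) • 𝓕 g w = 𝓕 g w + 𝓕 g (-w) := by rw [hreflect, two_smul]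
      _ = ∫ v, (Complex.exp (↑(-2 * π * v * w) * Complex.I)
            + Complex.exp (↑(-2 * π * v * -w) * Complex.I)) • g v := by
        simp only [fourier_real_eq_integral_exp_smul, add_smul]
        rw [integral_add (hint w) (hint (-w))]
      _ = (2 : ℂ) • ∫ v, (cos (2 * π * v * w) : ℂ) • g v := by
        rw [← integral_smul]
        congr 1 with v
        rw [smul_smul, Complex.ofReal_cos, Complex.two_cos, add_comm]
        push_cast; ring_nf
  exact smul_right_injective E two_ne_zero htwo

theorem add_comp_neg_eq_zero_of_cosineTransform_eq_zero {f : ℝ → ℝ} (hf : Continuous f)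
    (hfi : Integrable f) (hvanish : ∀ σ, 0 < σ → cosineTransform f σ = 0) (x : ℝ) :
    f x + f (-x) = 0 := by
  set g : ℝ → ℂ := fun v ↦ ((f v + f (-v) : ℝ) : ℂ)
  have hg : Continuous g := by fun_prop
  have hgi : Integrable g := (hfi.add hfi.comp_neg).ofReal
  have hFg : ∀ w, 𝓕 g w = ((2 * cosineTransform f (2 * π * w) : ℝ) : ℂ) := by
    intro w
    rw [Real.fourier_eq_integral_cos_smul_of_even hgi (fun v ↦ by simp only [g, neg_neg, add_comm]),
      ← cosineTransform_add_comp_neg hfi, cosineTransform, ← integral_complex_ofReal]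
    congr 1 with v
    simp only [g, smul_eq_mul, Complex.ofReal_mul]
    ring_nf
  have hFg0 : 𝓕 g = 0 := by
    refine Continuous.ext_on (dense_compl_singleton 0) ?_ continuous_const fun w hw ↦ ?_
    · exact VectorFourier.fourierIntegral_continuous Real.continuous_fourierChar
        continuous_inner hgi
    rcases lt_or_gt_of_ne hw with hneg | hpos
    · rw [hFg, ← cosineTransform_neg, hvanish _ (by nlinarith [pi_pos]), mul_zero,
        Complex.ofReal_zero, Pi.zero_apply]
    · rw [hFg, hvanish _ (by positivity), mul_zero, Complex.ofReal_zero, Pi.zero_apply]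
  have hinv := hgi.fourierInv_fourier_eq (by rw [hFg0]; exact integrable_zero _ _ _)
    hg.continuousAt (v := x)
  simp only [hFg0, Real.fourierInv_eq, Pi.zero_apply, smul_zero, integral_zero] at hinv
  exact Complex.ofReal_eq_zero.1 hinv.symm

theorem exists_lt_sqrt_sq_sub_sq_eq (ξ : ℝ) {σ : ℝ} (hσ : 0 < σ) :
    ∃ η, ξ < η ∧ √(η ^ 2 - ξ ^ 2) = σ := by
  refine ⟨√(ξ ^ 2 + σ ^ 2), ?_, ?_⟩
  · calc ξ ≤ |ξ| := le_abs_self ξ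
      _ = √(ξ ^ 2) := (sqrt_sq_eq_abs ξ).symm
      _ < √(ξ ^ 2 + σ ^ 2) := sqrt_lt_sqrt (sq_nonneg ξ) (lt_add_of_pos_right _ (by positivity))
  · rw [sq_sqrt (by positivity), add_sub_cancel_left, sqrt_sq hσ.le]

theorem cosine_transform_injectivity_general
    (h : ℝ → ℝ) (hc : Continuous h) (hcs : HasCompactSupport h)
    (hvan : ∀ z : ℝ, z ≤ 1 → h z = 0)
    (ξ : ℝ)
    (hΦ : ∀ η : ℝ, ξ < η →
      (∫ z in Set.Ioi (1 : ℝ),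
        h z * Real.cos (z * Real.sqrt (η ^ 2 - ξ ^ 2)) / Real.sqrt (η ^ 2 - ξ ^ 2)) = 0) :
    ∀ z : ℝ, h z = 0 := by
  have hcos : ∀ σ, 0 < σ → cosineTransform h σ = 0 := by
    intro σ hσ
    obtain ⟨η, hξη, hsqrt⟩ := exists_lt_sqrt_sq_sub_sq_eq ξ hσ
    have hη := hΦ η hξη
    rw [hsqrt, integral_div, div_eq_zero_iff,
      setIntegral_eq_integral_of_forall_compl_eq_zero fun z hz ↦ by
        rw [hvan z (not_lt.1 hz), zero_mul]] at hη
    exact hη.resolve_right hσ.ne'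
  intro z
  rcases le_or_gt z 1 with hz | hz
  · exact hvan z hz
  · have := add_comp_neg_eq_zero_of_cosineTransform_eq_zero hc
      (hc.integrable_of_hasCompactSupport hcs) hcos z
    rwa [hvan (-z) (by linarith), add_zero] at this

theorem cosine_transform_injectivity
    (h : ℝ → ℝ) (hc : Continuous h) (hcs : HasCompactSupport h)
    (hvan : ∀ z : ℝ, z ≤ 1 → h z = 0)
    (ξ : ℝ) (hξ : 0 < ξ)
    (hΦ : ∀ η : ℝ, ξ < η →
      (∫ z in Set.Ioi (1 : ℝ),
        h z * Real.cos (z * Real.sqrt (η ^ 2 - ξ ^ 2)) / Real.sqrt (η ^ 2 - ξ ^ 2)) = 0) :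
    ∀ z : ℝ, h z = 0 :=
  cosine_transform_injectivity_general h hc hcs hvan ξ hΦ
end
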